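/- Suppose (B_m)_{m≥0} are events with P(A | Z = m+L) ≤ P(B | Z = m) for all m, P(B | Z = m) = 0 whenever m < (1+η/2)λ, and Z ~ Poisson(λ). Then P(A) ≤ (1+η/2)^{-L} P(B). -/

import Mathlib

open MeasureTheory ProbabilityTheory
open scoped ENNReal Nat

/-! Split `A` and `B` along the fibres of `Z`. The terms of `A` vanish below `Z = L`, and the term
at `Z = m + L` is bounded by the term of `B` at `Z = m` times the weight ratio
`P(Z = m + L) / P(Z = m) = λ^L m! / (m + L)!`. That ratio is at most `(1 + η/2)^{-L}` as soon as
`m ≥ (1 + η/2) λ`, and for smaller `m` the term of `B` is zero. -/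

lemma pow_mul_factorial_le_factorial_add {x : ℝ} {m : ℕ} (hx : 0 ≤ x) (hxm : x ≤ m) (L : ℕ) :
    x ^ L * m ! ≤ (m + L)! := by
  calc x ^ L * m ! ≤ (m + 1 : ℝ) ^ L * m ! := by gcongr; linarith
    _ ≤ (m + L)! := by
      rw [mul_comm]
      exact_mod_cast Nat.factorial_mul_pow_le_factorial

lemma pow_add_div_factorial_le {lam c : ℝ} {m : ℕ} (hlam : 0 ≤ lam) (hc : 0 < c)
    (hm : c * lam ≤ m) (L : ℕ) :
    lam ^ (m + L) / (m + L)! ≤ c⁻¹ ^ L * (lam ^ m / m !) := by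
  have key := pow_mul_factorial_le_factorial_add (by positivity) hm L
  rw [div_le_iff₀ (by positivity)]
  calc lam ^ (m + L) = c⁻¹ ^ L * (lam ^ m / m !) * ((c * lam) ^ L * m !) := by
        rw [mul_pow, inv_pow, pow_add]
        field_simp
    _ ≤ c⁻¹ ^ L * (lam ^ m / m !) * (m + L)! := by gcongr

lemma tsum_mul_le_mul_tsum_of_shift {a b w : ℕ → ℝ≥0∞} {r : ℝ≥0∞} {L : ℕ}
    (ha : ∀ n < L, a n = 0) (hab : ∀ m, a (m + L) ≤ b m)
    (hw : ∀ m, b m ≠ 0 → w (m + L) ≤ r * w m) :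
    ∑' n, a n * w n ≤ r * ∑' m, b m * w m := by
  rw [← ENNReal.summable.sum_add_tsum_nat_add' (k := L),
    Finset.sum_eq_zero fun n hn ↦ by rw [ha n (Finset.mem_range.1 hn), zero_mul], zero_add,
    ← ENNReal.tsum_mul_left]
  refine ENNReal.tsum_le_tsum fun m ↦ ?_
  by_cases hb : b m = 0
  · simp [le_antisymm (hb ▸ hab m) zero_le]
  · calc a (m + L) * w (m + L) ≤ b m * (r * w m) := mul_le_mul' (hab m) (hw m hb)
      _ = r * (b m * w m) := mul_left_comm ..

lemma tsum_cond_mul_measure_fiber {Ω α : Type*} [MeasurableSpace Ω] [Countable α]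
    [MeasurableSpace α] [MeasurableSingletonClass α] {X : Ω → α} (hX : Measurable X)
    (μ : Measure Ω) [IsFiniteMeasure μ] (t : Set Ω) :
    ∑' x, μ[t | X ⁻¹' {x}] * μ (X ⁻¹' {x}) = μ t := by
  have hfib : ∀ x, MeasurableSet (X ⁻¹' {x}) := fun x ↦ hX (.singleton x)
  simp_rw [cond_mul_eq_inter (hfib _), ← Measure.restrict_apply (hfib _)]
  rw [← measure_iUnion (fun x y hxy ↦ Set.disjoint_singleton.2 hxy |>.preimage X) hfib,
    ← Set.preimage_iUnion, Set.iUnion_of_singleton, Set.preimage_univ, Measure.restrict_apply_univ]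

theorem poisson_conditional_contraction_general {Ω : Type*} [MeasurableSpace Ω]
    (μ : Measure Ω) [IsProbabilityMeasure μ]
    (Z : Ω → ℕ) (hZmeas : Measurable Z)
    (lam η : ℝ) (hlam : 0 < lam) (hη : 0 < η) (L : ℕ)
    (A B : Set Ω)
    (hZ : ∀ m : ℕ, μ {ω | Z ω = m}
        = ENNReal.ofReal (lam ^ m * Real.exp (-lam) / (Nat.factorial m : ℝ)))
    (hAB : ∀ m : ℕ, μ[|{ω | Z ω = m + L}] A ≤ μ[|{ω | Z ω = m}] B)
    (hA0 : ∀ m : ℕ, m < L → μ[|{ω | Z ω = m}] A = 0)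
    (hB0 : ∀ m : ℕ, (m : ℝ) < (1 + η / 2) * lam → μ[|{ω | Z ω = m}] B = 0) :
    μ A ≤ ENNReal.ofReal (((1 + η / 2)⁻¹) ^ L) * μ B := by
  have hc : 0 < 1 + η / 2 := by linarith
  have hZ' : ∀ m, μ (Z ⁻¹' {m}) = ENNReal.ofReal (lam ^ m / m ! * Real.exp (-lam)) :=
    fun m ↦ (hZ m).trans (by rw [div_mul_eq_mul_div, mul_div_right_comm])
  rw [← tsum_cond_mul_measure_fiber hZmeas μ A, ← tsum_cond_mul_measure_fiber hZmeas μ B]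
  refine tsum_mul_le_mul_tsum_of_shift hA0 hAB fun m hBm ↦ ?_
  have hm : (1 + η / 2) * lam ≤ m := not_lt.1 (mt (hB0 m) hBm)
  rw [hZ', hZ', ← ENNReal.ofReal_mul (by positivity), ← mul_assoc]
  gcongr
  exact pow_add_div_factorial_le hlam.le hc hm L

/-- If `Z ~ Poisson(λ)`, `P(A | Z = m+L) ≤ P(B | Z = m)` for all `m`,
`P(A | Z = m) = 0` for `m < L`, and `P(B | Z = m) = 0` whenever
`m < (1 + η/2)·λ`, then `P(A) ≤ (1 + η/2)^{-L}·P(B)`. -/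
theorem poisson_conditional_contraction {Ω : Type*} [MeasurableSpace Ω]
    (μ : Measure Ω) [IsProbabilityMeasure μ]
    (Z : Ω → ℕ) (hZmeas : Measurable Z)
    (lam η : ℝ) (hlam : 0 < lam) (hη : 0 < η) (L : ℕ) (hL : 1 ≤ L)
    (A B : Set Ω) (hA : MeasurableSet A)
    (hZ : ∀ m : ℕ, μ {ω | Z ω = m}
        = ENNReal.ofReal (lam ^ m * Real.exp (-lam) / (Nat.factorial m : ℝ)))
    (hAB : ∀ m : ℕ, μ[|{ω | Z ω = m + L}] A ≤ μ[|{ω | Z ω = m}] B)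
    (hA0 : ∀ m : ℕ, m < L → μ[|{ω | Z ω = m}] A = 0)
    (hB0 : ∀ m : ℕ, (m : ℝ) < (1 + η / 2) * lam → μ[|{ω | Z ω = m}] B = 0) :
    μ A ≤ ENNReal.ofReal (((1 + η / 2)⁻¹) ^ L) * μ B :=
  poisson_conditional_contraction_general μ Z hZmeas lam η hlam hη L A B hZ hAB hA0 hB0
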